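/- arXiv:1007.0189 — 2 statements merged into one kernel-verified Lean document; each statement's English description precedes it below -/
import Mathlib

section
/- Let (X,T) be a minimal weakly mixing dynamical system on a compact metric space and d ≥ 1. Then for every x ∈ X, the orbit closure of x^[d] = (x,...,x) under the face group F^[d] equals {x} × X^{2^d − 1}, and consequently Q^[d](X) = X^{2^d}. -/
/-- The dynamical parallelepiped set `Q^[d](X)`. -/
def Qcube {X : Type*} [TopologicalSpace X] (T : X ≃ₜ X) (d : ℕ) :
    Set ((Fin d → Bool) → X) :=
  closure {y | ∃ (x : X) (n : Fin d → ℤ),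
    y = fun ε => (T.toEquiv ^ (∑ i, if ε i then n i else 0)) x}

/-- The `j`-th face transformation of the cube space `X^{2^d}`. -/
def faceEquiv {X : Type*} (T : X ≃ X) (d : ℕ) (j : Fin d) :
    Equiv.Perm ((Fin d → Bool) → X) :=
  Equiv.piCongrRight (fun ε : Fin d → Bool => if ε j then T else Equiv.refl X)

/-- The face group `F^[d]`: the group generated by the face transformations. -/
def faceGroup {X : Type*} (T : X ≃ X) (d : ℕ) :
    Subgroup (Equiv.Perm ((Fin d → Bool) → X)) :=
  Subgroup.closure {g | ∃ j : Fin d, g = faceEquiv T d j}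

/-- The orbit closure of a point of the cube space under the face group. -/
def faceOrbitClosure {X : Type*} [TopologicalSpace X] (T : X ≃ₜ X) (d : ℕ)
    (z : (Fin d → Bool) → X) : Set ((Fin d → Bool) → X) :=
  closure {w | ∃ g ∈ faceGroup T.toEquiv d, w = g z}

/-- Weak mixing: the product system `(X × X, T × T)` is topologically transitive. -/
def WeaklyMixing {X : Type*} [TopologicalSpace X] (T : X ≃ₜ X) : Prop :=
  ∀ U V : Set (X × X), IsOpen U → IsOpen V → U.Nonempty → V.Nonempty →
    ∃ n : ℤ, ((fun p : X × X => ((T.toEquiv ^ n) p.1, (T.toEquiv ^ n) p.2)) '' U ∩ V).Nonempty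

/-!
The face group is the image of the action of `ℤ^d` in which `n` moves the coordinate `ε` by
`T^(n·ε)`, so the face orbit of `x^[d]` consists of the points `(T^(n·ε) x)_ε`, whose first
coordinate is `x`. Conversely, for nonempty open sets `V_ε` we find `n` with `T^(n·ε) x ∈ V_ε`
for all `ε ≠ 0` by induction on `d`: the first coordinate `k` of `n` must send `x` into
`V_(1,0,…,0)` and satisfy `T^k V_(0,η) ∩ V_(1,η) ≠ ∅` for every `η`. By minimality and compactness
the return times of `x` to an open set have bounded gaps `S`, and by weak mixing (Furstenberg's
intersection lemma) finitely many pairs of open sets, here the pairs shifted by the elements of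
`S`, share a hitting time; together they produce `k`. Finally every point of `X^(2^d)` lies in
the face orbit closure of its first coordinate, which is contained in `Q^[d]`.
-/

open Equiv Set

section CubeExponent

variable {d : ℕ}

/-- The exponent `n · ε`. -/
def cubeExponent (n : Fin d → ℤ) (ε : Fin d → Bool) : ℤ :=
  ∑ i, if ε i then n i else 0

theorem cubeExponent_add (m n : Fin d → ℤ) (ε : Fin d → Bool) :
    cubeExponent (m + n) ε = cubeExponent m ε + cubeExponent n ε := by
  simp only [cubeExponent, ← Finset.sum_add_distrib]
  exact Finset.sum_congr rfl fun i _ => by cases ε i <;> simp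

@[simp]
theorem cubeExponent_zero (ε : Fin d → Bool) : cubeExponent 0 ε = 0 := by
  simp [cubeExponent]

@[simp]
theorem cubeExponent_false (n : Fin d → ℤ) : cubeExponent n (fun _ => false) = 0 := by
  simp [cubeExponent]

theorem cubeExponent_single (j : Fin d) (k : ℤ) (ε : Fin d → Bool) :
    cubeExponent (Pi.single j k) ε = if ε j then k else 0 := by
  rw [cubeExponent, Finset.sum_eq_single j (fun i _ hij => by simp [hij]) (by simp)]
  simp

theorem cubeExponent_cons (k : ℤ) (m : Fin d → ℤ) (b : Bool) (η : Fin d → Bool) :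
    cubeExponent (Fin.cons k m : Fin (d + 1) → ℤ) (Fin.cons b η) =
      (if b then k else 0) + cubeExponent m η := by
  simp [cubeExponent, Fin.sum_univ_succ]

end CubeExponent

section FaceGroup

variable {X : Type*} (T : Perm X) (d : ℕ)

def cubePerm : Multiplicative (Fin d → ℤ) →* Perm ((Fin d → Bool) → X) where
  toFun n := Equiv.piCongrRight fun ε => T ^ cubeExponent n.toAdd ε
  map_one' := by ext; simp
  map_mul' m n := by ext; simp [cubeExponent_add, zpow_add]

theorem cubePerm_apply (n : Multiplicative (Fin d → ℤ)) (w : (Fin d → Bool) → X)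
    (ε : Fin d → Bool) : cubePerm T d n w ε = (T ^ cubeExponent n.toAdd ε) (w ε) :=
  rfl

theorem faceEquiv_eq_cubePerm (j : Fin d) :
    faceEquiv T d j = cubePerm T d (.ofAdd (Pi.single j 1)) := by
  ext w ε
  simp only [faceEquiv, cubePerm_apply, toAdd_ofAdd, cubeExponent_single]
  by_cases h : ε j <;> simp [h]

theorem closure_ofAdd_single_eq_top :
    Subgroup.closure (range fun j : Fin d => Multiplicative.ofAdd (Pi.single j (1 : ℤ))) = ⊤ := by
  refine eq_top_iff.mpr fun n _ => ?_
  have hn : n = ∏ j, .ofAdd (Pi.single j 1) ^ n.toAdd j := by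
    apply Multiplicative.toAdd.injective
    ext i
    simp [Finset.sum_apply, Pi.single_apply]
  rw [hn]
  exact Subgroup.prod_mem _ fun j _ => Subgroup.zpow_mem _ (Subgroup.subset_closure (mem_range_self j)) _

theorem faceGroup_eq_range : faceGroup T d = (cubePerm T d).range := by
  rw [MonoidHom.range_eq_map, ← closure_ofAdd_single_eq_top, MonoidHom.map_closure, ← range_comp,
    faceGroup]
  congr 1
  ext g
  simp [faceEquiv_eq_cubePerm, eq_comm]

end FaceGroup

section Dynamics

variable {X : Type*} [TopologicalSpace X] {T : X ≃ₜ X}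

theorem Homeomorph.continuous_toEquiv_zpow (T : X ≃ₜ X) (n : ℤ) :
    Continuous (T.toEquiv ^ n) := by
  let toPerm : (X ≃ₜ X) →* Perm X := ⟨⟨Homeomorph.toEquiv, rfl⟩, fun _ _ => rfl⟩
  rw [show T.toEquiv ^ n = (T ^ n).toEquiv from (map_zpow toPerm T n).symm]
  exact (T ^ n).continuous

def hittingTimes (T : X ≃ₜ X) (U V : Set X) : Set ℤ :=
  {n | (U ∩ (T.toEquiv ^ n) ⁻¹' V).Nonempty}

theorem WeaklyMixing.hittingTimes_nonempty (hwm : WeaklyMixing T) {U V : Set X}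
    (hU : IsOpen U) (hV : IsOpen V) (hUne : U.Nonempty) (hVne : V.Nonempty) :
    (hittingTimes T U V).Nonempty := by
  obtain ⟨n, _, ⟨⟨a, b⟩, hab, rfl⟩, hV⟩ :=
    hwm _ _ (hU.prod hU) (hV.prod hV) (hUne.prod hUne) (hVne.prod hVne)
  exact ⟨n, a, hab.1, hV.1⟩

/-- Furstenberg's intersection lemma. -/
theorem WeaklyMixing.exists_hittingTimes_subset_inter (hwm : WeaklyMixing T) {U V U' V' : Set X}
    (hU : IsOpen U) (hV : IsOpen V) (hU' : IsOpen U') (hV' : IsOpen V')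
    (hUne : U.Nonempty) (hVne : V.Nonempty) (hU'ne : U'.Nonempty) (hV'ne : V'.Nonempty) :
    ∃ U'' V'', IsOpen U'' ∧ IsOpen V'' ∧ U''.Nonempty ∧ V''.Nonempty ∧
      hittingTimes T U'' V'' ⊆ hittingTimes T U V ∩ hittingTimes T U' V' := by
  obtain ⟨m, _, ⟨⟨a, b⟩, hab, rfl⟩, hU'V'⟩ :=
    hwm _ _ (hU.prod hV) (hU'.prod hV') (hUne.prod hVne) (hU'ne.prod hV'ne)
  have hcont := T.continuous_toEquiv_zpow m
  refine ⟨U ∩ (T.toEquiv ^ m) ⁻¹' U', V ∩ (T.toEquiv ^ m) ⁻¹' V',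
    hU.inter (hU'.preimage hcont), hV.inter (hV'.preimage hcont),
    ⟨a, hab.1, hU'V'.1⟩, ⟨b, hab.2, hU'V'.2⟩, ?_⟩
  rintro n ⟨y, ⟨hyU, hyU'⟩, hnyV, hnyV'⟩
  refine ⟨⟨y, hyU, hnyV⟩, ⟨(T.toEquiv ^ m) y, hyU', ?_⟩⟩
  rwa [mem_preimage, Perm.zpow_apply_comm]

theorem WeaklyMixing.exists_forall_mem_hittingTimes [Nonempty X] (hwm : WeaklyMixing T)
    {ι : Type*} [Fintype ι] (U V : ι → Set X) (hU : ∀ i, IsOpen (U i)) (hV : ∀ i, IsOpen (V i))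
    (hUne : ∀ i, (U i).Nonempty) (hVne : ∀ i, (V i).Nonempty) :
    ∃ n, ∀ i, n ∈ hittingTimes T (U i) (V i) := by
  classical
  have key : ∀ s : Finset ι, ∃ U' V', IsOpen U' ∧ IsOpen V' ∧ U'.Nonempty ∧ V'.Nonempty ∧
      ∀ i ∈ s, hittingTimes T U' V' ⊆ hittingTimes T (U i) (V i) := by
    intro s
    induction s using Finset.induction_on with
    | empty => exact ⟨univ, univ, isOpen_univ, isOpen_univ, univ_nonempty, univ_nonempty, by simp⟩
    | insert j s _ ih =>
      obtain ⟨U', V', hU', hV', hU'ne, hV'ne, hsub⟩ := ih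
      obtain ⟨U'', V'', hU'', hV'', hU''ne, hV''ne, hsub'⟩ := hwm.exists_hittingTimes_subset_inter
        (hU j) (hV j) hU' hV' (hUne j) (hVne j) hU'ne hV'ne
      refine ⟨U'', V'', hU'', hV'', hU''ne, hV''ne, (Finset.forall_mem_insert _ _ _).mpr ⟨?_, ?_⟩⟩
      · exact hsub'.trans inter_subset_left
      · exact fun i hi => (hsub'.trans inter_subset_right).trans (hsub i hi)
  obtain ⟨U', V', hU', hV', hU'ne, hV'ne, hsub⟩ := key Finset.univ
  obtain ⟨n, hn⟩ := hwm.hittingTimes_nonempty hU' hV' hU'ne hV'ne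
  exact ⟨n, fun i => hsub i (Finset.mem_univ i) hn⟩

theorem exists_finset_forall_exists_zpow_mem [CompactSpace X]
    (hmin : ∀ x : X, Dense {y : X | ∃ n : ℤ, y = (T.toEquiv ^ n) x})
    {V : Set X} (hV : IsOpen V) (hVne : V.Nonempty) :
    ∃ S : Finset ℤ, ∀ y, ∃ s ∈ S, (T.toEquiv ^ s) y ∈ V := by
  obtain ⟨S, hS⟩ := isCompact_univ.elim_finite_subcover (fun s : ℤ => (T.toEquiv ^ s) ⁻¹' V)
    (fun s => hV.preimage (T.continuous_toEquiv_zpow s)) fun y _ => by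
      obtain ⟨_, ⟨s, rfl⟩, hs⟩ := (hmin y).exists_mem_open hV hVne
      exact mem_iUnion.mpr ⟨s, hs⟩
  exact ⟨S, fun y => by simpa using hS (mem_univ y)⟩

theorem exists_zpow_mem_and_forall_mem_hittingTimes [CompactSpace X]
    (hmin : ∀ x : X, Dense {y : X | ∃ n : ℤ, y = (T.toEquiv ^ n) x}) (hwm : WeaklyMixing T)
    (x : X) {V₀ : Set X} (hV₀ : IsOpen V₀) (hV₀ne : V₀.Nonempty)
    {ι : Type*} [Fintype ι] (U V : ι → Set X) (hU : ∀ i, IsOpen (U i)) (hV : ∀ i, IsOpen (V i))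
    (hUne : ∀ i, (U i).Nonempty) (hVne : ∀ i, (V i).Nonempty) :
    ∃ k, (T.toEquiv ^ k) x ∈ V₀ ∧ ∀ i, k ∈ hittingTimes T (U i) (V i) := by
  have : Nonempty X := ⟨x⟩
  obtain ⟨S, hS⟩ := exists_finset_forall_exists_zpow_mem hmin hV₀ hV₀ne
  obtain ⟨m, hm⟩ := hwm.exists_forall_mem_hittingTimes (ι := ι × S) (fun p => U p.1)
    (fun p => (T.toEquiv ^ (p.2 : ℤ)) ⁻¹' V p.1) (fun p => hU p.1)
    (fun p => (hV p.1).preimage (T.continuous_toEquiv_zpow p.2)) (fun p => hUne p.1)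
    (fun p => (hVne p.1).preimage (T.toEquiv ^ (p.2 : ℤ)).surjective)
  obtain ⟨s, hs, hsx⟩ := hS ((T.toEquiv ^ m) x)
  refine ⟨s + m, by rwa [zpow_add, Perm.mul_apply], fun i => ?_⟩
  obtain ⟨y, hyU, hyV⟩ := hm (i, ⟨s, hs⟩)
  exact ⟨y, hyU, by rwa [mem_preimage, zpow_add, Perm.mul_apply]⟩

end Dynamics

section FaceOrbit

variable {X : Type*} [TopologicalSpace X] [CompactSpace X] {T : X ≃ₜ X}

theorem exists_forall_zpow_cubeExponent_mem
    (hmin : ∀ x : X, Dense {y : X | ∃ n : ℤ, y = (T.toEquiv ^ n) x}) (hwm : WeaklyMixing T)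
    (x : X) {d : ℕ} (V : (Fin d → Bool) → Set X) (hV : ∀ ε, IsOpen (V ε))
    (hVne : ∀ ε, (V ε).Nonempty) :
    ∃ n : Fin d → ℤ, ∀ ε ≠ (fun _ => false), (T.toEquiv ^ cubeExponent n ε) x ∈ V ε := by
  induction d with
  | zero => exact ⟨0, fun ε hε => absurd (funext finZeroElim) hε⟩
  | succ d ih =>
    obtain ⟨k, hk, hkN⟩ := exists_zpow_mem_and_forall_mem_hittingTimes hmin hwm x
      (hV (Fin.cons true fun _ => false)) (hVne _) (fun η => V (Fin.cons false η))
      (fun η => V (Fin.cons true η)) (fun _ => hV _) (fun _ => hV _) (fun _ => hVne _)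
      (fun _ => hVne _)
    obtain ⟨m, hm⟩ := ih (fun η => V (Fin.cons false η) ∩ (T.toEquiv ^ k) ⁻¹' V (Fin.cons true η))
      (fun η => (hV _).inter ((hV _).preimage (T.continuous_toEquiv_zpow k))) hkN
    refine ⟨Fin.cons k m, fun ε hε => ?_⟩
    obtain ⟨b, η, rfl⟩ : ∃ b η, ε = Fin.cons b η := ⟨_, _, (Fin.cons_self_tail ε).symm⟩
    rw [cubeExponent_cons]
    by_cases hη : η = fun _ => false
    · subst hη
      cases b
      · exact absurd (funext fun i => Fin.cases rfl (fun _ => rfl) i) hε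
      · simpa using hk
    · obtain ⟨hm₀, hm₁⟩ := hm η hη
      cases b
      · simpa using hm₀
      · rwa [mem_preimage, ← Perm.mul_apply, ← zpow_add] at hm₁

theorem faceOrbitClosure_const [T1Space X]
    (hmin : ∀ x : X, Dense {y : X | ∃ n : ℤ, y = (T.toEquiv ^ n) x}) (hwm : WeaklyMixing T)
    (d : ℕ) (x : X) :
    faceOrbitClosure T d (fun _ => x) = {w | w (fun _ => false) = x} := by
  refine subset_antisymm (closure_minimal ?_ (isClosed_singleton.preimage (continuous_apply _)))
    fun w hw => mem_closure_iff.mpr fun o ho hwo => ?_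
  · rintro _ ⟨g, hg, rfl⟩
    obtain ⟨n, rfl⟩ := (faceGroup_eq_range T.toEquiv d).le hg
    simp [cubePerm_apply]
  · obtain ⟨V, hV, hVo⟩ := isOpen_pi_iff'.mp ho w hwo
    obtain ⟨n, hn⟩ := exists_forall_zpow_cubeExponent_mem hmin hwm x V (fun ε => (hV ε).1)
      fun ε => ⟨w ε, (hV ε).2⟩
    refine ⟨cubePerm T.toEquiv d (.ofAdd n) fun _ => x, hVo fun ε _ => ?_,
      _, (faceGroup_eq_range T.toEquiv d).ge ⟨_, rfl⟩, rfl⟩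
    by_cases hε : ε = fun _ => false
    · subst hε
      simpa [cubePerm_apply, ← show w _ = x from hw] using (hV _).2
    · exact hn ε hε

end FaceOrbit

theorem faceOrbitClosure_const_subset_Qcube {X : Type*} [TopologicalSpace X] (T : X ≃ₜ X)
    (d : ℕ) (x : X) : faceOrbitClosure T d (fun _ => x) ⊆ Qcube T d := by
  refine closure_mono ?_
  rintro _ ⟨g, hg, rfl⟩
  obtain ⟨n, rfl⟩ := (faceGroup_eq_range T.toEquiv d).le hg
  exact ⟨x, n.toAdd, rfl⟩

theorem weakly_mixing_face_orbit_closure_general {X : Type*} [MetricSpace X] [CompactSpace X]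
    (T : X ≃ₜ X)
    (hmin : ∀ x : X, Dense {y : X | ∃ n : ℤ, y = (T.toEquiv ^ n) x})
    (hwm : WeaklyMixing T) (d : ℕ) :
    (∀ x : X, faceOrbitClosure T d (fun _ => x) =
      {w : (Fin d → Bool) → X | w (fun _ => false) = x}) ∧
    Qcube T d = Set.univ := by
  have horbit := faceOrbitClosure_const hmin hwm d
  refine ⟨horbit, eq_univ_of_forall fun w => ?_⟩
  apply faceOrbitClosure_const_subset_Qcube T d (w fun _ => false)
  rw [horbit]
  rfl

theorem weakly_mixing_face_orbit_closure {X : Type*} [MetricSpace X] [CompactSpace X]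
    (T : X ≃ₜ X)
    (hmin : ∀ x : X, Dense {y : X | ∃ n : ℤ, y = (T.toEquiv ^ n) x})
    (hwm : WeaklyMixing T) (d : ℕ) (hd : 1 ≤ d) :
    (∀ x : X, faceOrbitClosure T d (fun _ => x) =
      {w : (Fin d → Bool) → X | w (fun _ => false) = x}) ∧
    Qcube T d = Set.univ :=
  weakly_mixing_face_orbit_closure_general T hmin hwm d
end

section
/- Let (X,T) be a system on a compact metric space, let x ∈ X, let y ∈ X be a minimal point proximal to x, and let U be an open neighborhood of y. Then N(x,U) = {n ∈ ℤ : Tⁿx ∈ U} is an IP set (it contains FS({pᵢ}ᵢ₌₁^∞) for some integer sequence (pᵢ)); in particular, for every d ≥ 1 there exists (p₁,...,p_d) ∈ ℤ^d such that T^{p·ε}x ∈ U for every nonzero ε ∈ {0,1}^d. -/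
/-!
Proximality and compactness put a diagonal point `(z, z)` into the orbit closure of `(x, y)` under
`T × T`, and minimality of `y` moves `z` back close to `y`; hence every neighbourhood of `y` is
visited by `x` and `y` at a common time. The IP sequence is built greedily: once all finite sums of
`p₀, …, p_{k-1}` send both `x` and `y` into `U`, the points with this property form an open set
whose intersection with `U` contains `y`, and a common visiting time of it is a valid `p_k`.
-/

/-- Proximality for the ℤ-system generated by a homeomorphism of a metric space. -/
def Proximal {X : Type*} [MetricSpace X] (T : X ≃ₜ X) (a b : X) : Prop :=
  ∀ δ > (0 : ℝ), ∃ n : ℤ, dist ((T.toEquiv ^ n) a) ((T.toEquiv ^ n) b) < δ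

/-- A point is minimal iff its orbit closure is a minimal subsystem. -/
def IsMinimalPoint {X : Type*} [TopologicalSpace X] (T : X ≃ₜ X) (y : X) : Prop :=
  ∀ z ∈ closure {y' : X | ∃ n : ℤ, y' = (T.toEquiv ^ n) y},
    y ∈ closure {z' : X | ∃ n : ℤ, z' = (T.toEquiv ^ n) z}

open Finset

theorem exists_seq_forall_of_extend {β : Type*} (P : ℕ → (ℕ → β) → Prop)
    (hP : ∀ k p q, (∀ i < k, p i = q i) → P k p → P k q) (p₀ : ℕ → β) (h₀ : P 0 p₀)
    (hstep : ∀ k p, P k p → ∃ b, P (k + 1) (Function.update p k b)) :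
    ∃ p : ℕ → β, ∀ k, P k p := by
  classical
  have hstep' : ∀ k p, ∃ b, P k p → P (k + 1) (Function.update p k b) := fun k p =>
    if hp : P k p then (hstep k p hp).imp fun _ hb _ => hb else ⟨p₀ 0, fun h => absurd h hp⟩
  choose next hnext using hstep'
  let g : ℕ → ℕ → β := fun k => Nat.rec p₀ (fun k q => Function.update q k (next k q)) k
  have hg : ∀ k, P k (g k) := fun k => Nat.rec h₀ (fun k ih => hnext k (g k) ih) k
  have hg_stable : ∀ k, ∀ i < k, g k i = next i (g i) := by
    intro k
    induction k with
    | zero => intro i hi; omega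
    | succ k ih =>
      intro i hi
      rcases (Nat.lt_succ_iff_lt_or_eq.mp hi) with hik | rfl
      · simp only [g, Function.update_of_ne hik.ne]; exact ih i hik
      · exact Function.update_self ..
  exact ⟨fun i => next i (g i), fun k => hP k _ _ (hg_stable k) (hg k)⟩

theorem forall_sum_fin_ite_of_forall_sum {M : Type*} [AddCommMonoid M] {Q : M → Prop}
    {p : ℕ → M} (h : ∀ α : Finset ℕ, α.Nonempty → Q (∑ i ∈ α, p i)) {d : ℕ}
    (ε : Fin d → Bool) (hε : ε ≠ fun _ => false) :
    Q (∑ i, if ε i then p i else 0) := by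
  have hsum : ∑ i, (if ε i then p i else 0) =
      ∑ i ∈ (univ.filter fun i => ε i).map Fin.valEmbedding, p i := by
    rw [sum_map, sum_filter]; rfl
  rw [hsum]
  apply h
  obtain ⟨i, hi⟩ := Function.ne_iff.mp hε
  exact ⟨i, mem_map_of_mem _ (mem_filter.mpr ⟨mem_univ _, by simpa using hi⟩)⟩

namespace Homeomorph

variable {X : Type*} [TopologicalSpace X]

theorem toEquiv_zpow (T : X ≃ₜ X) (n : ℤ) : (T ^ n).toEquiv = T.toEquiv ^ n :=
  map_zpow (⟨⟨toEquiv, rfl⟩, fun _ _ => rfl⟩ : (X ≃ₜ X) →* Equiv.Perm X) T n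

theorem continuous_toEquiv_zpow_s19 (T : X ≃ₜ X) (n : ℤ) : Continuous (T.toEquiv ^ n) := by
  rw [← toEquiv_zpow]; exact (T ^ n).continuous

end Homeomorph

section VisitsAlongFS

variable {X : Type*} [TopologicalSpace X] (T : X ≃ₜ X) (U : Set X)

def VisitsAlongFS (p : ℕ → ℤ) (k : ℕ) (z : X) : Prop :=
  ∀ α ∈ (range k).powerset, α.Nonempty → (T.toEquiv ^ ∑ i ∈ α, p i) z ∈ U

variable {T U}

theorem isOpen_setOf_visitsAlongFS (hU : IsOpen U) (p : ℕ → ℤ) (k : ℕ) :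
    IsOpen {z | VisitsAlongFS T U p k z} := by
  simp only [VisitsAlongFS, Set.ofPred_forall]
  exact isOpen_biInter_finset fun α _ =>
    isOpen_iInter_of_finite fun _ => hU.preimage (T.continuous_toEquiv_zpow_s19 _)

theorem VisitsAlongFS.congr {p q : ℕ → ℤ} {k : ℕ} {z : X} (hpq : ∀ i < k, p i = q i)
    (h : VisitsAlongFS T U p k z) : VisitsAlongFS T U q k z := by
  intro α hα hne
  rw [← sum_congr rfl fun i hi => hpq i (mem_range.mp (mem_powerset.mp hα hi))]
  exact h α hα hne

theorem VisitsAlongFS.update {p : ℕ → ℤ} {k : ℕ} {m : ℤ} {z : X}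
    (hz : VisitsAlongFS T U p k z) (hmz : (T.toEquiv ^ m) z ∈ U)
    (hmz' : VisitsAlongFS T U p k ((T.toEquiv ^ m) z)) :
    VisitsAlongFS T U (Function.update p k m) (k + 1) z := by
  intro α hα hne
  rw [mem_powerset, range_add_one] at hα
  have hsum_eq : ∀ β ⊆ range k, ∑ i ∈ β, Function.update p k m i = ∑ i ∈ β, p i :=
    fun β hβ => sum_congr rfl fun i hi =>
      Function.update_of_ne (mem_range.mp (hβ hi)).ne _ _
  by_cases hk : k ∈ α
  · have hβ : α.erase k ⊆ range k := fun i hi => by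
      obtain ⟨hik, hiα⟩ := mem_erase.mp hi
      exact (mem_insert.mp (hα hiα)).resolve_left hik
    rw [← add_sum_erase α _ hk, Function.update_self, hsum_eq _ hβ, add_comm, zpow_add,
      Equiv.Perm.mul_apply]
    rcases (α.erase k).eq_empty_or_nonempty with hβe | hβne
    · simpa [hβe] using hmz
    · exact hmz' _ (mem_powerset.mpr hβ) hβne
  · have hα' : α ⊆ range k := fun i hi =>
      (mem_insert.mp (hα hi)).resolve_left (by rintro rfl; exact hk hi)
    rw [hsum_eq α hα']
    exact hz α (mem_powerset.mpr hα') hne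

end VisitsAlongFS

theorem Proximal.exists_diag_mem_closure_orbit {X : Type*} [MetricSpace X] [CompactSpace X]
    {T : X ≃ₜ X} {x y : X} (h : Proximal T x y) :
    ∃ z, (z, z) ∈ closure (Set.range fun n : ℤ => ((T.toEquiv ^ n) x, (T.toEquiv ^ n) y)) := by
  set K := closure (Set.range fun n : ℤ => ((T.toEquiv ^ n) x, (T.toEquiv ^ n) y))
  obtain ⟨⟨a, b⟩, hab, hmin⟩ := isClosed_closure.isCompact.exists_isMinOn
    ((Set.range_nonempty _).mono subset_closure : K.Nonempty)
    (continuous_dist (α := X)).continuousOn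
  have hab_dist : dist a b = 0 := by
    refine le_antisymm (le_of_forall_pos_lt_add fun δ hδ => ?_) dist_nonneg
    obtain ⟨n, hn⟩ := h δ hδ
    simpa using (hmin (subset_closure ⟨n, rfl⟩)).trans_lt hn
  obtain rfl := dist_eq_zero.mp hab_dist
  exact ⟨a, hab⟩

theorem exists_zpow_mem_of_proximal_of_isMinimalPoint {X : Type*} [MetricSpace X]
    [CompactSpace X] {T : X ≃ₜ X} {x y : X} (hymin : IsMinimalPoint T y)
    (hprox : Proximal T x y) {V : Set X} (hV : IsOpen V) (hyV : y ∈ V) :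
    ∃ n : ℤ, (T.toEquiv ^ n) x ∈ V ∧ (T.toEquiv ^ n) y ∈ V := by
  obtain ⟨z, hz⟩ := hprox.exists_diag_mem_closure_orbit
  have hz_orbit : z ∈ closure {y' | ∃ n : ℤ, y' = (T.toEquiv ^ n) y} :=
    map_mem_closure continuous_snd hz (by rintro _ ⟨n, rfl⟩; exact ⟨n, rfl⟩)
  obtain ⟨_, hmV, m, rfl⟩ := mem_closure_iff.mp (hymin z hz_orbit) V hV hyV
  have hTm := T.continuous_toEquiv_zpow_s19 m
  obtain ⟨_, hnV, n, rfl⟩ := mem_closure_iff.mp hz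
    ((Prod.map (T.toEquiv ^ m) (T.toEquiv ^ m)) ⁻¹' V ×ˢ V)
    ((hV.prod hV).preimage (hTm.prodMap hTm)) ⟨hmV, hmV⟩
  refine ⟨m + n, ?_⟩
  rw [zpow_add]
  exact hnV

theorem central_is_IP {X : Type*} [MetricSpace X] [CompactSpace X]
    (T : X ≃ₜ X) (x y : X) (hymin : IsMinimalPoint T y) (hprox : Proximal T x y)
    (U : Set X) (hU : IsOpen U) (hyU : y ∈ U) :
    (∃ p : ℕ → ℤ, ∀ α : Finset ℕ, α.Nonempty →
      (T.toEquiv ^ (∑ i ∈ α, p i)) x ∈ U) ∧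
    ∀ d : ℕ, 1 ≤ d → ∃ n : Fin d → ℤ,
      ∀ ε : Fin d → Bool, ε ≠ (fun _ => false) →
        (T.toEquiv ^ (∑ i, if ε i then n i else 0)) x ∈ U := by
  obtain ⟨p, hp⟩ := exists_seq_forall_of_extend
    (fun k p => VisitsAlongFS T U p k x ∧ VisitsAlongFS T U p k y)
    (fun k p q hpq h => ⟨h.1.congr hpq, h.2.congr hpq⟩) (fun _ => 0)
    (by simp [VisitsAlongFS]) fun k p ⟨hx, hy⟩ => by
      obtain ⟨m, hmx, hmy⟩ := exists_zpow_mem_of_proximal_of_isMinimalPoint hymin hprox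
        (hU.inter (isOpen_setOf_visitsAlongFS hU p k)) ⟨hyU, hy⟩
      exact ⟨m, hx.update hmx.1 hmx.2, hy.update hmy.1 hmy.2⟩
  have hFS : ∀ α : Finset ℕ, α.Nonempty → (T.toEquiv ^ (∑ i ∈ α, p i)) x ∈ U := by
    intro α hα
    obtain ⟨k, hk⟩ := α.exists_nat_subset_range
    exact (hp k).1 α (mem_powerset.mpr hk) hα
  exact ⟨⟨p, hFS⟩, fun d _ => ⟨fun i => p i, forall_sum_fin_ite_of_forall_sum
    (Q := fun s => (T.toEquiv ^ s) x ∈ U) hFS⟩⟩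
end
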